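/- arXiv:1012.5251 — 8 statements merged into one kernel-verified Lean document; each statement's English description precedes it below -/
import Mathlib

section
/- Let n, m ≥ 1, N = n·m, and let A ∈ Matrix (Fin N) (Fin N) ℂ be block-upper-triangular (A_{I,J} = 0 for I > J in m×m blocks). Then for every pair of indices (i,j) lying strictly below the block diagonal (i.e. ⌈i/m⌉ > ⌈j/m⌉) and for all indices k, l one has π_{(i,j),(k,l)}(A) = 0. In other words, the Poisson bracket of any constrained-to-zero entry with any other entry vanishes on the set of block-upper-triangular matrices, so the bracket (Poisson) restricts to a Poisson bracket on block-upper-triangular matrices. -/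
/-! If `A i j` lies below the block diagonal, then for a block-upper-triangular `A` every
nonzero entry `A i b` in row `i` has `j < b`, and every nonzero entry `A a j` in column `j` has
`a < i`. In each of the three monomials of `π_{(i,j),(k,l)}` either an entry vanishes or these
comparisons fix the signs so that the coefficient is `-1 + 1`, `-1 + 1` or `1 - 1`. -/

open Matrix

noncomputable section

/-- The sign of the difference of two indices, as a complex number
(`sgn : ℤ → ℤ` with `sgn 0 = 0`). -/
def fsgn {N : ℕ} (a b : Fin N) : ℂ := ((((a : ℕ) : ℤ) - ((b : ℕ) : ℤ)).sign : ℤ)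

/-- The quadratic Poisson bivector components
`π_{(i,j),(k,l)}(A) = (sgn(j−l)+sgn(i−k))·A_{i,l}·A_{k,j} + (sgn(j−k)+1)·A_{j,l}·A_{i,k}
  + (sgn(i−l)−1)·A_{l,j}·A_{k,i}`. -/
def pb {N : ℕ} (A : Matrix (Fin N) (Fin N) ℂ) (i j k l : Fin N) : ℂ :=
  (fsgn j l + fsgn i k) * A i l * A k j
    + (fsgn j k + 1) * A j l * A i k
    + (fsgn i l - 1) * A l j * A k i

/-- `A` is block-upper-triangular with respect to `m × m` blocks: the entry `A i j`
vanishes whenever the block index of `i` exceeds the block index of `j`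
(0-based indices: block index is `i / m`). -/
def IsBUT (n m : ℕ) (A : Matrix (Fin (n * m)) (Fin (n * m)) ℂ) : Prop :=
  ∀ i j : Fin (n * m), (j : ℕ) / m < (i : ℕ) / m → A i j = 0

lemma fsgn_of_lt {N : ℕ} {a b : Fin N} (h : a < b) : fsgn a b = -1 := by
  have : ((a : ℕ) : ℤ) - (b : ℕ) < 0 := by omega
  simp [fsgn, Int.sign_eq_neg_one_of_neg this]

lemma fsgn_of_gt {N : ℕ} {a b : Fin N} (h : b < a) : fsgn a b = 1 := by
  have : 0 < ((a : ℕ) : ℤ) - (b : ℕ) := by omega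
  simp [fsgn, Int.sign_eq_one_of_pos this]

lemma mul_mul_eq_zero_of_ne_zero {R : Type*} [MulZeroClass R] {c x y : R}
    (h : x ≠ 0 → y ≠ 0 → c = 0) : c * x * y = 0 := by
  by_cases hx : x = 0
  · simp [hx]
  by_cases hy : y = 0
  · simp [hy]
  simp [h hx hy]

namespace IsBUT

variable {n m : ℕ} {A : Matrix (Fin (n * m)) (Fin (n * m)) ℂ}

lemma div_le_div_of_ne_zero (hA : IsBUT n m A) {a b : Fin (n * m)} (hab : A a b ≠ 0) :
    (a : ℕ) / m ≤ (b : ℕ) / m :=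
  not_lt.mp fun h => hab (hA a b h)

variable {i j : Fin (n * m)}

lemma lt_col_of_ne_zero (hA : IsBUT n m A) (hij : (j : ℕ) / m < (i : ℕ) / m)
    {b : Fin (n * m)} (hib : A i b ≠ 0) : j < b :=
  Nat.lt_of_div_lt_div (hij.trans_le (hA.div_le_div_of_ne_zero hib))

lemma row_lt_of_ne_zero (hA : IsBUT n m A) (hij : (j : ℕ) / m < (i : ℕ) / m)
    {a : Fin (n * m)} (haj : A a j ≠ 0) : a < i :=
  Nat.lt_of_div_lt_div ((hA.div_le_div_of_ne_zero haj).trans_lt hij)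

end IsBUT

theorem poisson_reduction_but_general (n m : ℕ)
    (A : Matrix (Fin (n * m)) (Fin (n * m)) ℂ) (hA : IsBUT n m A)
    (i j : Fin (n * m)) (hij : (j : ℕ) / m < (i : ℕ) / m)
    (k l : Fin (n * m)) :
    pb A i j k l = 0 := by
  have h₁ : (fsgn j l + fsgn i k) * A i l * A k j = 0 :=
    mul_mul_eq_zero_of_ne_zero fun hil hkj => by
      rw [fsgn_of_lt (hA.lt_col_of_ne_zero hij hil), fsgn_of_gt (hA.row_lt_of_ne_zero hij hkj)]
      ring
  have h₂ : (fsgn j k + 1) * A j l * A i k = 0 :=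
    mul_mul_eq_zero_of_ne_zero fun _ hik => by
      rw [fsgn_of_lt (hA.lt_col_of_ne_zero hij hik)]
      ring
  have h₃ : (fsgn i l - 1) * A l j * A k i = 0 :=
    mul_mul_eq_zero_of_ne_zero fun hlj _ => by
      rw [fsgn_of_gt (hA.row_lt_of_ne_zero hij hlj)]
      ring
  rw [pb, h₁, h₂, h₃, add_zero, add_zero]

/-- for a block-upper-triangular matrix `A`, the Poisson bracket of any
constrained-to-zero entry (an entry strictly below the block diagonal) with any other
entry vanishes, so the bracket restricts to block-upper-triangular matrices. -/
theorem poisson_reduction_but (n m : ℕ) (hn : 1 ≤ n) (hm : 1 ≤ m)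
    (A : Matrix (Fin (n * m)) (Fin (n * m)) ℂ) (hA : IsBUT n m A)
    (i j : Fin (n * m)) (hij : (j : ℕ) / m < (i : ℕ) / m)
    (k l : Fin (n * m)) :
    pb A i j k l = 0 :=
  poisson_reduction_but_general n m A hA i j hij k l
end
end

section
/- Let N ≥ 1 and let A ∈ Matrix (Fin N) (Fin N) ℂ be symmetric (Aᵀ = A). Then for all indices i, j, k, l: (a) π_{(i,j),(k,l)}(A) = π_{(j,i),(k,l)}(A) (i.e. the bracket of A_{i,j} − A_{j,i} with any entry vanishes on symmetric matrices, so the Poisson structure restricts to symmetric matrices); and (b) the restricted bracket takes the form π_{(i,j),(k,l)}(A) = (sgn(j−l) + sgn(i−k))·A_{i,l}·A_{k,j} + (sgn(j−k) + sgn(i−l))·A_{j,l}·A_{k,i}. -/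
open Matrix

noncomputable section

theorem pb_of_isSymm {N : ℕ} {A : Matrix (Fin N) (Fin N) ℂ} (hA : A.IsSymm) (i j k l : Fin N) :
    pb A i j k l =
      (fsgn j l + fsgn i k) * A i l * A k j + (fsgn j k + fsgn i l) * A j l * A k i := by
  rw [pb, hA.apply l j, hA.apply i k]
  ring

theorem poisson_reduction_symmetric_general (N : ℕ)
    (A : Matrix (Fin N) (Fin N) ℂ) (hA : Aᵀ = A) (i j k l : Fin N) :
    pb A i j k l = pb A j i k l ∧
      pb A i j k l =
        (fsgn j l + fsgn i k) * A i l * A k j + (fsgn j k + fsgn i l) * A j l * A k i := by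
  refine ⟨?_, pb_of_isSymm hA i j k l⟩
  -- the symmetric form is invariant under `i ↔ j`
  rw [pb_of_isSymm hA, pb_of_isSymm hA]
  ring

/-- the Poisson structure restricts to symmetric matrices:
(a) the bracket of `A_{i,j} − A_{j,i}` with any entry vanishes on symmetric matrices;
(b) the restricted bracket takes the stated symmetric form. -/
theorem poisson_reduction_symmetric (N : ℕ) (hN : 1 ≤ N)
    (A : Matrix (Fin N) (Fin N) ℂ) (hA : Aᵀ = A) (i j k l : Fin N) :
    pb A i j k l = pb A j i k l ∧
      pb A i j k l =
        (fsgn j l + fsgn i k) * A i l * A k j + (fsgn j k + fsgn i l) * A j l * A k i :=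
  poisson_reduction_symmetric_general N A hA i j k l
end
end

section
/- Let N ≥ 1 and define the reflection P : Matrix (Fin N) (Fin N) ℂ → Matrix (Fin N) (Fin N) ℂ by P(A)_{i,j} := A_{N+1−j, N+1−i} (transposition with respect to the antidiagonal). Then P is an antiautomorphism of the Poisson algebra: for all A and all indices i, j, k, l, π_{(N+1−j, N+1−i),(N+1−l, N+1−k)}(A) = − π_{(i,j),(k,l)}(P(A)). -/
open Matrix

noncomputable section

/-- The reflection `P(A)_{i,j} := A_{N+1−j, N+1−i}` (transposition with respect to the
antidiagonal); in 0-based indices, `P(A) i j = A j.rev i.rev`. -/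
def reflP {N : ℕ} (A : Matrix (Fin N) (Fin N) ℂ) : Matrix (Fin N) (Fin N) ℂ :=
  fun i j => A j.rev i.rev

theorem fsgn_rev {N : ℕ} (a b : Fin N) : fsgn a.rev b.rev = -fsgn a b := by
  rw [fsgn, fsgn, ← Int.cast_neg, ← Int.sign_neg, Fin.val_rev, Fin.val_rev]
  congr 3
  omega

theorem reflection_antiautomorphism_general (N : ℕ)
    (A : Matrix (Fin N) (Fin N) ℂ) (i j k l : Fin N) :
    pb A j.rev i.rev l.rev k.rev = - pb (reflP A) i j k l := by
  -- Reversing indices negates every sign; the second and third monomials of `pb` trade places.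
  simp only [pb, reflP, fsgn_rev]
  ring

/-- the reflection `P` is an antiautomorphism of the Poisson algebra:
`π_{(N+1−j,N+1−i),(N+1−l,N+1−k)}(A) = − π_{(i,j),(k,l)}(P(A))`. -/
theorem reflection_antiautomorphism (N : ℕ) (hN : 1 ≤ N)
    (A : Matrix (Fin N) (Fin N) ℂ) (i j k l : Fin N) :
    pb A j.rev i.rev l.rev k.rev = - pb (reflP A) i j k l :=
  reflection_antiautomorphism_general N A i j k l
end
end

section
/- Let N ≥ 1, A ∈ Matrix (Fin N) (Fin N) ℂ, and let λ, μ ∈ ℂ with λ ≠ 0, μ ≠ 0, λ ≠ μ and λ·μ ≠ 1. Set G(λ) := A + λ⁻¹·Aᵀ and G(μ) := A + μ⁻¹·Aᵀ. Then the substitution G(λ) = A + λ⁻¹Aᵀ is a homomorphism from the affine algebra to the finite algebra: for all indices i, j, k, l, π_{(i,j),(k,l)}(A) + λ⁻¹·π_{(j,i),(k,l)}(A) + μ⁻¹·π_{(i,j),(l,k)}(A) + λ⁻¹μ⁻¹·π_{(j,i),(l,k)}(A) = (sgn(i−k) − (λ+μ)/(λ−μ))·G(λ)_{k,j}·G(μ)_{i,l}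 + (sgn(j−l) + (λ+μ)/(λ−μ))·G(μ)_{k,j}·G(λ)_{i,l} + (sgn(j−k) − (1+λμ)/(1−λμ))·G(λ)_{i,k}·G(μ)_{j,l} + (sgn(i−l) + (1+λμ)/(1−λμ))·G(λ)_{l,j}·G(μ)_{k,i}. -/
open Matrix

noncomputable section

/-!
Expanding `G(λ) = A + λ⁻¹Aᵀ` and `G(μ) = A + μ⁻¹Aᵀ`, the coefficient of every sign `sgn(a - b)`
is the same bilinear expression on both sides, for any values of the signs. What remains only
involves `(λ + μ)/(λ - μ)` through its product with `λ⁻¹ - μ⁻¹`, which is `-(λ⁻¹ + μ⁻¹)`, and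
`(1 + λμ)/(1 - λμ)` through its product with `1 - λ⁻¹μ⁻¹`, which is `-(1 + λ⁻¹μ⁻¹)`.
-/

theorem add_div_sub_mul_inv_sub_inv {K : Type*} [Field K] {a b : K}
    (ha : a ≠ 0) (hb : b ≠ 0) (hab : a ≠ b) :
    (a + b) / (a - b) * (a⁻¹ - b⁻¹) = -(a⁻¹ + b⁻¹) := by
  have : a - b ≠ 0 := sub_ne_zero.mpr hab
  field_simp
  ring

theorem one_add_mul_div_one_sub_mul_mul {K : Type*} [Field K] {a b : K}
    (ha : a ≠ 0) (hb : b ≠ 0) (hab : a * b ≠ 1) :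
    (1 + a * b) / (1 - a * b) * (1 - a⁻¹ * b⁻¹) = -(1 + a⁻¹ * b⁻¹) := by
  have : 1 - a * b ≠ 0 := sub_ne_zero.mpr hab.symm
  field_simp
  ring

theorem pb_add_smul_transpose {N : ℕ} (A : Matrix (Fin N) (Fin N) ℂ) {c d α β : ℂ}
    (hα : α * (c - d) = -(c + d)) (hβ : β * (1 - c * d) = -(1 + c * d)) (i j k l : Fin N) :
    pb A i j k l + c * pb A j i k l + d * pb A i j l k + c * d * pb A j i l k
      = (fsgn i k - α) * (A + c • Aᵀ) k j * (A + d • Aᵀ) i l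
        + (fsgn j l + α) * (A + d • Aᵀ) k j * (A + c • Aᵀ) i l
        + (fsgn j k - β) * (A + c • Aᵀ) i k * (A + d • Aᵀ) j l
        + (fsgn i l + β) * (A + c • Aᵀ) l j * (A + d • Aᵀ) k i := by
  simp only [pb, Matrix.add_apply, Matrix.smul_apply, transpose_apply, smul_eq_mul]
  linear_combination (A j k * A i l - A k j * A l i) * hα + (A j l * A i k - A l j * A k i) * hβ

theorem affine_homomorphism_general (N : ℕ)
    (A : Matrix (Fin N) (Fin N) ℂ) (lam mu : ℂ)
    (hlam : lam ≠ 0) (hmu : mu ≠ 0) (hne : lam ≠ mu) (hprod : lam * mu ≠ 1)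
    (i j k l : Fin N) :
    pb A i j k l + lam⁻¹ * pb A j i k l + mu⁻¹ * pb A i j l k
        + lam⁻¹ * mu⁻¹ * pb A j i l k
      = (fsgn i k - (lam + mu) / (lam - mu)) * (A + lam⁻¹ • Aᵀ) k j * (A + mu⁻¹ • Aᵀ) i l
        + (fsgn j l + (lam + mu) / (lam - mu)) * (A + mu⁻¹ • Aᵀ) k j * (A + lam⁻¹ • Aᵀ) i l
        + (fsgn j k - (1 + lam * mu) / (1 - lam * mu)) * (A + lam⁻¹ • Aᵀ) i k * (A + mu⁻¹ • Aᵀ) j l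
        + (fsgn i l + (1 + lam * mu) / (1 - lam * mu)) * (A + lam⁻¹ • Aᵀ) l j * (A + mu⁻¹ • Aᵀ) k i :=
  pb_add_smul_transpose A (add_div_sub_mul_inv_sub_inv hlam hmu hne)
    (one_add_mul_div_one_sub_mul_mul hlam hmu hprod) i j k l

/-- the substitution `G(λ) = A + λ⁻¹Aᵀ` is a homomorphism from the affine
(twisted-Yangian) Poisson algebra to the finite algebra: the bracket
`{G_{i,j}(λ), G_{k,l}(μ)}` computed by bilinearity from `π` equals the defining affine
bracket evaluated on `G(λ)`, `G(μ)`. -/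
theorem affine_homomorphism (N : ℕ) (hN : 1 ≤ N)
    (A : Matrix (Fin N) (Fin N) ℂ) (lam mu : ℂ)
    (hlam : lam ≠ 0) (hmu : mu ≠ 0) (hne : lam ≠ mu) (hprod : lam * mu ≠ 1)
    (i j k l : Fin N) :
    pb A i j k l + lam⁻¹ * pb A j i k l + mu⁻¹ * pb A i j l k
        + lam⁻¹ * mu⁻¹ * pb A j i l k
      = (fsgn i k - (lam + mu) / (lam - mu)) * (A + lam⁻¹ • Aᵀ) k j * (A + mu⁻¹ • Aᵀ) i l
        + (fsgn j l + (lam + mu) / (lam - mu)) * (A + mu⁻¹ • Aᵀ) k j * (A + lam⁻¹ • Aᵀ) i l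
        + (fsgn j k - (1 + lam * mu) / (1 - lam * mu)) * (A + lam⁻¹ • Aᵀ) i k * (A + mu⁻¹ • Aᵀ) j l
        + (fsgn i l + (1 + lam * mu) / (1 - lam * mu)) * (A + lam⁻¹ • Aᵀ) l j * (A + mu⁻¹ • Aᵀ) k i :=
  affine_homomorphism_general N A lam mu hlam hmu hne hprod i j k l
end
end

section
/- Let N ≥ 1, let λ, μ ∈ ℂ with λ ≠ μ and λ·μ ≠ 1, and let X, Y ∈ Matrix (Fin N) (Fin N) ℂ with Y invertible. For indices i, j, k, l define B_{(i,j),(k,l)} := (sgn(i−k) − (λ+μ)/(λ−μ))·X_{k,j}·Y_{i,l} + (sgn(j−l) + (λ+μ)/(λ−μ))·Y_{k,j}·X_{i,l} + (sgn(j−k) − (1+λμ)/(1−λμ))·X_{i,k}·Y_{j,l} + (sgn(i−l) + (1+λμ)/(1−λμ))·X_{l,j}·Y_{k,i}. Then for all i, j: Σ_{k,l} B_{(i,j),(k,l)}·(Y⁻¹)_{l,k} = 0. (This expresses that the coefficients of det 𝒢(μ) are central in the affine Poisson algebra: {𝒢_{i,j}(λ), det 𝒢(μ)} = Σ_{k,l}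 {𝒢_{i,j}(λ), 𝒢_{k,l}(μ)}·𝒢(μ)⁻¹_{l,k} = 0.) -/
open Matrix

noncomputable section

/-- The right-hand side of the defining bracket `{𝒢_{i,j}(λ), 𝒢_{k,l}(μ)}` of the affine
(twisted-Yangian) Poisson algebra, with `X = 𝒢(λ)` and `Y = 𝒢(μ)`. -/
def affBr {N : ℕ} (lam mu : ℂ) (X Y : Matrix (Fin N) (Fin N) ℂ) (i j k l : Fin N) : ℂ :=
  (fsgn i k - (lam + mu) / (lam - mu)) * X k j * Y i l
    + (fsgn j l + (lam + mu) / (lam - mu)) * Y k j * X i l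
    + (fsgn j k - (1 + lam * mu) / (1 - lam * mu)) * X i k * Y j l
    + (fsgn i l + (1 + lam * mu) / (1 - lam * mu)) * X l j * Y k i

/-!
Summing against `Y⁻¹` contracts each of the four terms of the bracket through `Y * Y⁻¹ = 1` or
`Y⁻¹ * Y = 1`, so only the diagonal index survives. There the sign factors vanish, and the two
`λ`-constants, like the two `λμ`-constants, enter with opposite signs and cancel.
-/

section Contraction

variable {n R : Type*} [Fintype n] [DecidableEq n] [CommSemiring R]

theorem sum_sum_mul_mul_of_mul_eq_one {A B : Matrix n n R} (h : A * B = 1) (c : n → R) (i : n) :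
    ∑ k, ∑ l, c k * A i l * B l k = c i := by
  calc ∑ k, ∑ l, c k * A i l * B l k = ∑ k, c k * (A * B) i k := by
        simp only [mul_apply, Finset.mul_sum, mul_assoc]
    _ = c i := by simp [h, one_apply]

theorem sum_sum_mul_mul_of_mul_eq_one' {A B : Matrix n n R} (h : B * A = 1) (c : n → R) (j : n) :
    ∑ k, ∑ l, c l * A k j * B l k = c j := by
  calc ∑ k, ∑ l, c l * A k j * B l k = ∑ l, c l * (B * A) l j := by
        simp only [mul_apply, Finset.mul_sum]
        rw [Finset.sum_comm]
        exact Finset.sum_congr rfl fun l _ => Finset.sum_congr rfl fun k _ => by ring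
    _ = c j := by simp [h, one_apply]

end Contraction

theorem fsgn_self {N : ℕ} (a : Fin N) : fsgn a a = 0 := by
  simp [fsgn]

theorem det_central_affine_general (N : ℕ) (lam mu : ℂ)
    (X Y : Matrix (Fin N) (Fin N) ℂ) (hY : IsUnit Y.det) (i j : Fin N) :
    ∑ k : Fin N, ∑ l : Fin N, affBr lam mu X Y i j k l * Y⁻¹ l k = 0 := by
  set c := (lam + mu) / (lam - mu)
  set d := (1 + lam * mu) / (1 - lam * mu)
  calc ∑ k : Fin N, ∑ l : Fin N, affBr lam mu X Y i j k l * Y⁻¹ l k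
      = (∑ k, ∑ l, (fsgn i k - c) * X k j * Y i l * Y⁻¹ l k)
        + (∑ k, ∑ l, (fsgn j l + c) * X i l * Y k j * Y⁻¹ l k)
        + (∑ k, ∑ l, (fsgn j k - d) * X i k * Y j l * Y⁻¹ l k)
        + (∑ k, ∑ l, (fsgn i l + d) * X l j * Y k i * Y⁻¹ l k) := by
        simp only [affBr, ← Finset.sum_add_distrib]
        exact Finset.sum_congr rfl fun k _ => Finset.sum_congr rfl fun l _ => by ring
    _ = (fsgn i i - c) * X i j + (fsgn j j + c) * X i j
        + (fsgn j j - d) * X i j + (fsgn i i + d) * X i j := by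
        rw [sum_sum_mul_mul_of_mul_eq_one (mul_nonsing_inv Y hY),
          sum_sum_mul_mul_of_mul_eq_one' (nonsing_inv_mul Y hY),
          sum_sum_mul_mul_of_mul_eq_one (mul_nonsing_inv Y hY),
          sum_sum_mul_mul_of_mul_eq_one' (nonsing_inv_mul Y hY)]
    _ = 0 := by
        rw [fsgn_self, fsgn_self]
        ring

/-- the coefficients of `det 𝒢(μ)` are central in the affine Poisson
algebra: `{𝒢_{i,j}(λ), det 𝒢(μ)} = Σ_{k,l} {𝒢_{i,j}(λ), 𝒢_{k,l}(μ)} · 𝒢(μ)⁻¹_{l,k} = 0`. -/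
theorem det_central_affine (N : ℕ) (hN : 1 ≤ N) (lam mu : ℂ)
    (hne : lam ≠ mu) (hprod : lam * mu ≠ 1)
    (X Y : Matrix (Fin N) (Fin N) ℂ) (hY : IsUnit Y.det) (i j : Fin N) :
    ∑ k : Fin N, ∑ l : Fin N, affBr lam mu X Y i j k l * Y⁻¹ l k = 0 :=
  det_central_affine_general N lam mu X Y hY i j
end
end

section
/- Let N ≥ 1. For all A ∈ Matrix (Fin N) (Fin N) ℂ, all t ∈ ℂ, and all indices i, j: Σ_{k,l} π_{(k,l),(i,j)}(A) · ( adj(A + t·Aᵀ)_{l,k} + t·adj(A + t·Aᵀ)_{k,l} ) = 0, where adj denotes the adjugate matrix. Consequently each coefficient c_k of t^k in the polynomial det(A + t·Aᵀ) is a central element of the Poisson algebra: {c_k, A_{i,j}} = 0 for all i, j. -/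
open Matrix

noncomputable section

/-!
Write `B = A + t • Aᵀ` and `G` for the gradient of `det B`, so that `G = (adj B)ᵀ + t • adj B`.
From `B * adj B = adj B * B = det B • 1` one gets `A * Gᵀ + Aᵀ * G = 2 det B • 1` and
`Aᵀ * G * A = A * G * Aᵀ`. After swapping `k ↔ l` in half of the sign terms of the bracket, every
sign `sgn (a - b)` multiplies the entry `(A * Gᵀ + Aᵀ * G) b a`, which vanishes off the diagonal
while the sign vanishes on it; the sign-free terms add up to `(Aᵀ * G * A - A * G * Aᵀ) i j = 0`.
-/

namespace Matrix

variable {n R : Type*} [Fintype n] [DecidableEq n]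

theorem transpose_mul_adjugate_mul_eq_mul_adjugate_mul_transpose {K : Type*} [Field K]
    (A : Matrix n n K) (t : K) :
    Aᵀ * adjugate (A + t • Aᵀ) * A = A * adjugate (A + t • Aᵀ) * Aᵀ := by
  set B := A + t • Aᵀ
  rcases eq_or_ne t 0 with rfl | ht
  · simp [B, Matrix.mul_assoc, adjugate_mul, mul_adjugate]
  · have hB : t • Aᵀ = B - A := by simp [B]
    apply smul_right_injective _ ht
    calc t • (Aᵀ * adjugate B * A) = (B * adjugate B) * A - A * adjugate B * A := by
          rw [← smul_mul, ← smul_mul, hB, sub_mul, sub_mul]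
      _ = A * (adjugate B * B) - A * adjugate B * A := by
          rw [mul_adjugate, adjugate_mul, smul_mul, one_mul, Matrix.mul_smul, mul_one]
      _ = t • (A * adjugate B * Aᵀ) := by
          rw [← Matrix.mul_smul, hB, mul_sub, ← Matrix.mul_assoc]

/-- The gradient `(∂/∂A_{kl}) det (A + t • Aᵀ)`. -/
def pencilDetGrad [CommRing R] (A : Matrix n n R) (t : R) : Matrix n n R :=
  (adjugate (A + t • Aᵀ))ᵀ + t • adjugate (A + t • Aᵀ)

theorem mul_pencilDetGrad_transpose_add_transpose_mul_pencilDetGrad [CommRing R]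
    (A : Matrix n n R) (t : R) :
    A * (pencilDetGrad A t)ᵀ + Aᵀ * pencilDetGrad A t
      = (2 * det (A + t • Aᵀ)) • (1 : Matrix n n R) := by
  have h : A * (pencilDetGrad A t)ᵀ + Aᵀ * pencilDetGrad A t
      = (A + t • Aᵀ) * adjugate (A + t • Aᵀ) + (adjugate (A + t • Aᵀ) * (A + t • Aᵀ))ᵀ := by
    simp only [pencilDetGrad, transpose_add, transpose_smul, transpose_transpose, transpose_mul,
      add_mul, mul_add, smul_mul, Matrix.mul_smul]
    abel
  rw [h, mul_adjugate, adjugate_mul, transpose_smul, transpose_one, ← add_smul, two_mul]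

theorem transpose_mul_pencilDetGrad_mul {K : Type*} [Field K] (A : Matrix n n K) (t : K) :
    Aᵀ * pencilDetGrad A t * A = A * pencilDetGrad A t * Aᵀ := by
  have h := transpose_mul_adjugate_mul_eq_mul_adjugate_mul_transpose A t
  have hT := congrArg transpose h
  simp only [transpose_mul, transpose_transpose, ← Matrix.mul_assoc] at hT
  simp only [pencilDetGrad, mul_add, add_mul, Matrix.mul_smul, smul_mul, h, hT]

end Matrix

theorem Finset.sum_sum_eq_of_eq_add_sub_swap {ι M : Type*} [Fintype ι] [AddCommGroup M]
    (f g h : ι → ι → M) (hfg : ∀ k l, f k l = g k l + h k l - h l k) :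
    ∑ k, ∑ l, f k l = ∑ k, ∑ l, g k l := by
  simp only [hfg, Finset.sum_sub_distrib, Finset.sum_add_distrib]
  rw [Finset.sum_comm (f := fun k l => h l k), add_sub_cancel_right]

theorem fsgn_mul_mul_apply_eq_zero {N : ℕ} {X : Matrix (Fin N) (Fin N) ℂ} (hX : X.IsDiag)
    (c : ℂ) (a b : Fin N) : fsgn a b * c * X b a = 0 := by
  rcases eq_or_ne a b with rfl | hab
  · simp [fsgn]
  · rw [hX hab.symm, mul_zero]

theorem sum_sum_pb_mul_eq_zero {N : ℕ} (A M : Matrix (Fin N) (Fin N) ℂ)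
    (hX : (A * Mᵀ + Aᵀ * M).IsDiag) (hM : Aᵀ * M * A = A * M * Aᵀ) (i j : Fin N) :
    ∑ k, ∑ l, pb A k l i j * M k l = 0 := by
  set X := A * Mᵀ + Aᵀ * M
  have hXi : ∀ k, ∑ l, (A i l * M k l + A l i * M l k) = X i k := by
    simp [X, mul_apply, Finset.sum_add_distrib]
  have hXj : ∀ l, ∑ k, (A k j * M k l + A j k * M l k) = X j l := by
    simp [X, mul_apply, Finset.sum_add_distrib, add_comm]
  have hi : ∑ k, ∑ l, fsgn k i * A k j * (A i l * M k l + A l i * M l k) = 0 := by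
    simp only [← Finset.mul_sum, hXi, fsgn_mul_mul_apply_eq_zero hX, Finset.sum_const_zero]
  have hj : ∑ k, ∑ l, fsgn l j * A i l * (A k j * M k l + A j k * M l k) = 0 := by
    rw [Finset.sum_comm]
    simp only [← Finset.mul_sum, hXj, fsgn_mul_mul_apply_eq_zero hX, Finset.sum_const_zero]
  have hsignfree : ∑ k, ∑ l, (A k i * M k l * A l j - A i k * M k l * A j l) = 0 := by
    have hAtMA : (Aᵀ * M * A) i j = ∑ k, ∑ l, A k i * M k l * A l j := by
      simp only [mul_apply, transpose_apply, Finset.sum_mul]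
      exact Finset.sum_comm
    have hAMAt : (A * M * Aᵀ) i j = ∑ k, ∑ l, A i k * M k l * A j l := by
      simp only [mul_apply, transpose_apply, Finset.sum_mul]
      exact Finset.sum_comm
    simp only [Finset.sum_sub_distrib, ← hAtMA, ← hAMAt, hM, sub_self]
  calc ∑ k, ∑ l, pb A k l i j * M k l
      = ∑ k, ∑ l, (fsgn k i * A k j * (A i l * M k l + A l i * M l k)
          + fsgn l j * A i l * (A k j * M k l + A j k * M l k)
          + (A k i * M k l * A l j - A i k * M k l * A j l)) :=
        Finset.sum_sum_eq_of_eq_add_sub_swap _ _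
          (fun k l => fsgn l i * A l j * A k i * M k l + fsgn k j * A j l * A i k * M k l)
          fun k l => by unfold pb; ring
    _ = 0 := by simp only [Finset.sum_add_distrib, hi, hj, hsignfree, add_zero]

theorem polynomial_central_elements_general (N : ℕ)
    (A : Matrix (Fin N) (Fin N) ℂ) (t : ℂ) (i j : Fin N) :
    ∑ k : Fin N, ∑ l : Fin N,
      pb A k l i j * ((A + t • Aᵀ).adjugate l k + t * (A + t • Aᵀ).adjugate k l) = 0 := by
  have hdiag : (A * (pencilDetGrad A t)ᵀ + Aᵀ * pencilDetGrad A t).IsDiag := by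
    rw [mul_pencilDetGrad_transpose_add_transpose_mul_pencilDetGrad]
    exact isDiag_smul_one _ _
  simpa [pencilDetGrad] using
    sum_sum_pb_mul_eq_zero A _ hdiag (transpose_mul_pencilDetGrad_mul A t) i j

/-- `{det(A + t·Aᵀ), A_{i,j}} = Σ_{k,l} π_{(k,l),(i,j)}(A) ·
(∂ det(A + t·Aᵀ)/∂A_{k,l}) = 0`, where
`∂ det(A + t·Aᵀ)/∂A_{k,l} = adj(A + t·Aᵀ)_{l,k} + t·adj(A + t·Aᵀ)_{k,l}`.
Consequently each coefficient of `t^k` in `det(A + t·Aᵀ)` is a central element of the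
Poisson algebra. -/
theorem polynomial_central_elements (N : ℕ) (hN : 1 ≤ N)
    (A : Matrix (Fin N) (Fin N) ℂ) (t : ℂ) (i j : Fin N) :
    ∑ k : Fin N, ∑ l : Fin N,
      pb A k l i j * ((A + t • Aᵀ).adjugate l k + t * (A + t • Aᵀ).adjugate k l) = 0 :=
  polynomial_central_elements_general N A t i j
end
end

section
/- Let N ≥ 1. Define the projections P_{+,1/2}, P_{−,1/2} on Matrix (Fin N) (Fin N) ℂ by (P_{±,1/2} X)_{i,j} := ((1 ± sgn(j−i))/2)·X_{i,j}. For A ∈ Matrix (Fin N) (Fin N) ℂ define P_A(ω) := P_{−,1/2}(ω·A) − P_{+,1/2}(ωᵀ·Aᵀ) and D_A(g) := A·g + gᵀ·A. Then for every A and every ω ∈ Matrix (Fin N) (Fin N) ℂ: Tr( ω · D_A(P_A(ω)) ) = 0. Equivalently, the bilinear form (ω₁, ω₂) ↦ Tr( ω₁ · D_A(P_A(ω₂)) ) on Matrix (Fin N) (Fin N) ℂ is skew-symmetric. -/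
/-!
With respect to the trace pairing `(X, Y) ↦ Tr(X Y)`, the projections `P_{−,1/2}` and
`P_{+,1/2}` are adjoint to each other and add up to the identity, and
`Tr(ω D_A(g)) = Tr((ωA + ωᵀAᵀ) g)`. Writing `P_A(ω) = P_{−,1/2}(ωA) − P_{+,1/2}(ωᵀAᵀ)`,
the symmetrised form `Tr(ω₁ D_A P_A ω₂) + Tr(ω₂ D_A P_A ω₁)` therefore collapses to
`Tr(ω₁Aω₂A) − Tr(ω₁ᵀAᵀω₂ᵀAᵀ)`, which vanishes by transposition and cyclicity of the trace.
-/

open Matrix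

noncomputable section

/-- The projection `P_{+,1/2}`: `(P_{+,1/2} X)_{i,j} = ((1 + sgn(j−i))/2)·X_{i,j}`. -/
def Pplus {N : ℕ} (X : Matrix (Fin N) (Fin N) ℂ) : Matrix (Fin N) (Fin N) ℂ :=
  fun i j => ((1 + fsgn j i) / 2) * X i j

/-- The projection `P_{−,1/2}`: `(P_{−,1/2} X)_{i,j} = ((1 − sgn(j−i))/2)·X_{i,j}`. -/
def Pminus {N : ℕ} (X : Matrix (Fin N) (Fin N) ℂ) : Matrix (Fin N) (Fin N) ℂ :=
  fun i j => ((1 - fsgn j i) / 2) * X i j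

/-- The map `P_A(ω) = P_{−,1/2}(ω·A) − P_{+,1/2}(ωᵀ·Aᵀ)`. -/
def PA {N : ℕ} (A ω : Matrix (Fin N) (Fin N) ℂ) : Matrix (Fin N) (Fin N) ℂ :=
  Pminus (ω * A) - Pplus (ωᵀ * Aᵀ)

/-- The anchor map `D_A(g) = A·g + gᵀ·A`. -/
def DA {N : ℕ} (A g : Matrix (Fin N) (Fin N) ℂ) : Matrix (Fin N) (Fin N) ℂ :=
  A * g + gᵀ * A

section

variable {N : ℕ}

lemma fsgn_swap (a b : Fin N) : fsgn a b = -fsgn b a := by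
  rw [fsgn, fsgn, ← neg_sub, Int.sign_neg, Int.cast_neg]

lemma Pminus_add_Pplus (X : Matrix (Fin N) (Fin N) ℂ) : Pminus X + Pplus X = X := by
  ext i j
  simp only [Pminus, Pplus, Matrix.add_apply]
  ring

lemma trace_mul_Pminus (X Y : Matrix (Fin N) (Fin N) ℂ) :
    (X * Pminus Y).trace = (Pplus X * Y).trace := by
  simp only [trace, diag, mul_apply, Pminus, Pplus]
  refine Finset.sum_congr rfl fun i _ => Finset.sum_congr rfl fun j _ => ?_
  rw [fsgn_swap i j]
  ring

lemma trace_mul_Pplus (X Y : Matrix (Fin N) (Fin N) ℂ) :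
    (X * Pplus Y).trace = (Y * Pminus X).trace := by
  rw [trace_mul_Pminus, trace_mul_comm]

lemma trace_mul_Pminus_add_swap (X Y : Matrix (Fin N) (Fin N) ℂ) :
    (X * Pminus Y).trace + (Y * Pminus X).trace = (X * Y).trace := by
  rw [← trace_mul_Pplus X Y, ← trace_add, ← Matrix.mul_add, Pminus_add_Pplus]

lemma trace_mul_Pminus_sub_Pplus_add_swap (X₁ Y₁ X₂ Y₂ : Matrix (Fin N) (Fin N) ℂ) :
    ((X₁ + Y₁) * (Pminus X₂ - Pplus Y₂)).trace + ((X₂ + Y₂) * (Pminus X₁ - Pplus Y₁)).trace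
      = (X₁ * X₂).trace - (Y₁ * Y₂).trace := by
  simp only [Matrix.add_mul, Matrix.mul_sub, trace_add, trace_sub, trace_mul_Pplus]
  linear_combination trace_mul_Pminus_add_swap X₁ X₂ - trace_mul_Pminus_add_swap Y₂ Y₁
    + trace_mul_comm Y₁ Y₂

lemma trace_mul_DA (A ω g : Matrix (Fin N) (Fin N) ℂ) :
    (ω * DA A g).trace = ((ω * A + ωᵀ * Aᵀ) * g).trace := by
  have h : (ω * (gᵀ * A)).trace = (ωᵀ * Aᵀ * g).trace := by
    rw [← trace_transpose, transpose_mul, transpose_mul, transpose_transpose, trace_mul_comm,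
      Matrix.mul_assoc]
  rw [DA, Matrix.mul_add, Matrix.add_mul, trace_add, trace_add, h, Matrix.mul_assoc ω A g]

lemma trace_mul_DA_PA_add_swap (A ω₁ ω₂ : Matrix (Fin N) (Fin N) ℂ) :
    (ω₁ * DA A (PA A ω₂)).trace + (ω₂ * DA A (PA A ω₁)).trace = 0 := by
  have h : (ω₁ᵀ * Aᵀ * (ω₂ᵀ * Aᵀ)).trace = (ω₁ * A * (ω₂ * A)).trace := by
    rw [← trace_transpose]
    simp only [transpose_mul, transpose_transpose, ← Matrix.mul_assoc]
    rw [trace_mul_comm, Matrix.mul_assoc, Matrix.mul_assoc, Matrix.mul_assoc]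
  rw [trace_mul_DA, trace_mul_DA, PA, PA, trace_mul_Pminus_sub_Pplus_add_swap, h, sub_self]

end

theorem bivector_skew_symmetric_general (N : ℕ)
    (A : Matrix (Fin N) (Fin N) ℂ) :
    (∀ ω : Matrix (Fin N) (Fin N) ℂ, (ω * DA A (PA A ω)).trace = 0) ∧
    (∀ ω₁ ω₂ : Matrix (Fin N) (Fin N) ℂ,
      (ω₁ * DA A (PA A ω₂)).trace = -(ω₂ * DA A (PA A ω₁)).trace) :=
  ⟨fun ω => by linear_combination trace_mul_DA_PA_add_swap A ω ω / 2,
    fun ω₁ ω₂ => by linear_combination trace_mul_DA_PA_add_swap A ω₁ ω₂⟩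

/-- for every `A` and every `ω`, `Tr(ω · D_A(P_A(ω))) = 0`;
equivalently, the bilinear form `(ω₁, ω₂) ↦ Tr(ω₁ · D_A(P_A(ω₂)))` is
skew-symmetric. -/
theorem bivector_skew_symmetric (N : ℕ) (hN : 1 ≤ N)
    (A : Matrix (Fin N) (Fin N) ℂ) :
    (∀ ω : Matrix (Fin N) (Fin N) ℂ, (ω * DA A (PA A ω)).trace = 0) ∧
    (∀ ω₁ ω₂ : Matrix (Fin N) (Fin N) ℂ,
      (ω₁ * DA A (PA A ω₂)).trace = -(ω₂ * DA A (PA A ω₁)).trace) :=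
  bivector_skew_symmetric_general N A
end
end

section
/- Let n ≥ 2, m ≥ 1, N = n·m, and 1 ≤ I ≤ n−1. Let A ∈ Matrix (Fin N) (Fin N) ℂ be block-upper-triangular with the diagonal block A_{I,I} invertible. Define the N×N block matrix B_{I,I+1}(A) equal to the identity except in the 2×2 block submatrix in block rows/columns I, I+1, where it equals [[A_{I,I+1}ᵀ·A_{I,I}^{−T}, −𝟙_m],[A_{I,I}·A_{I,I}^{−T}, 0]]. Then Ã := B_{I,I+1}(A)·A·B_{I,I+1}(A)ᵀ is again block-upper-triangular, and its blocks are: Ã_{I,I} = A_{I+1,I+1}, Ã_{I+1,I+1} = A_{I,I}, Ã_{I,I+1} = A_{I,I+1}ᵀ; for J < I: Ã_{J,I} = A_{J,I}·A_{I,I}⁻¹·A_{I,I+1} − A_{J,I+1} and Ã_{J,I+1} = A_{J,I}·A_{I,I}⁻¹·A_{I,I}ᵀ; for J > I+1: Ã_{I,J} = A_{I,I+1}ᵀ·A_{I,I}^{−T}·A_{I,J} − A_{I+1,J} and Ã_{I+1,J} = A_{I,I}·A_{I,I}^{−T}·A_{I,J}; all other blocks coincide with those of A. In particular, if det A_{J,J}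 = 1 for all J then det Ã_{J,J} = 1 for all J, so the braid transformation β_{I,I+1} maps 𝒜_{n,m} to itself. -/
/-!
Cut every matrix into `m × m` blocks, so that block products are computed as matrix products
over the ring of `m × m` matrices. Each block row of `B = B_{I,I+1}(A)` has at most two nonzero
blocks, so multiplying by `B` on the left (by `Bᵀ` on the right) replaces block rows (columns)
`I, I+1` by explicit two-term combinations and leaves all others alone. On the `2 × 2` core the
terms collapse using `A_{I+1,I} = 0` and `A_{I,I} A_{I,I}⁻¹ = 1`; a block of `B A Bᵀ` below the
diagonal is a combination of blocks of `A` below the diagonal, because `I + 1` is adjacent to `I`.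
Since the diagonal blocks are only permuted, the determinant condition is preserved.
-/

open Matrix

noncomputable section

/-- The `(K,L)` block (of size `m × m`) of an `nm × nm` matrix. -/
def blk {n m : ℕ} (A : Matrix (Fin (n * m)) (Fin (n * m)) ℂ) (K L : Fin n) :
    Matrix (Fin m) (Fin m) ℂ :=
  fun a b =>
    A ⟨K.val * m + a.val, by
        have ha := a.isLt
        have h2 : (K.val + 1) * m ≤ n * m := Nat.mul_le_mul_right m K.isLt
        have h3 : K.val * m + m = (K.val + 1) * m := by ring
        omega⟩
      ⟨L.val * m + b.val, by
        have hb := b.isLt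
        have h2 : (L.val + 1) * m ≤ n * m := Nat.mul_le_mul_right m L.isLt
        have h3 : L.val * m + m = (L.val + 1) * m := by ring
        omega⟩

/-- The block index of a global index. -/
def blkIdx {n m : ℕ} (hm : 0 < m) (i : Fin (n * m)) : Fin n :=
  ⟨(i : ℕ) / m, (Nat.div_lt_iff_lt_mul hm).mpr i.isLt⟩

/-- The position of a global index inside its block. -/
def inIdx {n m : ℕ} (hm : 0 < m) (i : Fin (n * m)) : Fin m :=
  ⟨(i : ℕ) % m, Nat.mod_lt _ hm⟩

/-- The braid-group matrix `B_{I,I+1}(A)`: the identity except in the block rows and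
columns `I, I' = I+1`, where it equals
`[[A_{I,I+1}ᵀ·A_{I,I}^{−T}, −𝟙_m], [A_{I,I}·A_{I,I}^{−T}, 0]]`. -/
def braidB {n m : ℕ} (hm : 0 < m) (I I' : Fin n)
    (A : Matrix (Fin (n * m)) (Fin (n * m)) ℂ) : Matrix (Fin (n * m)) (Fin (n * m)) ℂ :=
  fun i j =>
    (if blkIdx hm i = I ∧ blkIdx hm j = I then (blk A I I')ᵀ * ((blk A I I)ᵀ)⁻¹
      else if blkIdx hm i = I ∧ blkIdx hm j = I' then -1
      else if blkIdx hm i = I' ∧ blkIdx hm j = I then blk A I I * ((blk A I I)ᵀ)⁻¹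
      else if blkIdx hm i = I' ∧ blkIdx hm j = I' then 0
      else if blkIdx hm i = blkIdx hm j then 1 else 0)
    (inIdx hm i) (inIdx hm j)

/-- The braid-group action `β_{I,I+1}(A) = B_{I,I+1}(A)·A·B_{I,I+1}(A)ᵀ`. -/
def braidAct {n m : ℕ} (hm : 0 < m) (I I' : Fin n)
    (A : Matrix (Fin (n * m)) (Fin (n * m)) ℂ) : Matrix (Fin (n * m)) (Fin (n * m)) ℂ :=
  braidB hm I I' A * A * (braidB hm I I' A)ᵀ

variable {n m : ℕ}

lemma blk_apply (A : Matrix (Fin (n * m)) (Fin (n * m)) ℂ) (K L : Fin n) (a b : Fin m) :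
    blk A K L a b = A (finProdFinEquiv (K, a)) (finProdFinEquiv (L, b)) := by
  unfold blk
  congr 1 <;> ext <;> simp only [finProdFinEquiv_apply_val] <;> ring

lemma finProdFinEquiv_val_div (hm : 0 < m) (K : Fin n) (a : Fin m) :
    (finProdFinEquiv (K, a) : ℕ) / m = K := by
  rw [finProdFinEquiv_apply_val, Nat.add_mul_div_left _ _ hm, Nat.div_eq_of_lt a.isLt, zero_add]

lemma blkIdx_finProdFinEquiv (hm : 0 < m) (K : Fin n) (a : Fin m) :
    blkIdx hm (finProdFinEquiv (K, a)) = K :=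
  Fin.ext (finProdFinEquiv_val_div hm K a)

lemma inIdx_finProdFinEquiv (hm : 0 < m) (K : Fin n) (a : Fin m) :
    inIdx hm (finProdFinEquiv (K, a)) = a := by
  ext
  simp only [inIdx, finProdFinEquiv_apply_val, Nat.add_mul_mod_self_left, Nat.mod_eq_of_lt a.isLt]

lemma blk_transpose (A : Matrix (Fin (n * m)) (Fin (n * m)) ℂ) (K L : Fin n) :
    blk Aᵀ K L = (blk A L K)ᵀ := rfl

lemma blk_mul (A B : Matrix (Fin (n * m)) (Fin (n * m)) ℂ) (K L : Fin n) :
    blk (A * B) K L = blk A K ⬝ᵥ fun J => blk B J L := by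
  ext a b
  simp only [blk_apply, mul_apply, dotProduct, Matrix.sum_apply]
  rw [← finProdFinEquiv.sum_comp, Fintype.sum_prod_type]

lemma isBUT_iff_blk_eq_zero (hm : 0 < m) (A : Matrix (Fin (n * m)) (Fin (n * m)) ℂ) :
    IsBUT n m A ↔ ∀ K L : Fin n, L < K → blk A K L = 0 := by
  constructor
  · intro hA K L hLK
    ext a b
    rw [blk_apply]
    apply hA
    rwa [finProdFinEquiv_val_div hm, finProdFinEquiv_val_div hm]
  · intro hA i j hij
    obtain ⟨⟨K, a⟩, rfl⟩ := finProdFinEquiv.surjective i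
    obtain ⟨⟨L, b⟩, rfl⟩ := finProdFinEquiv.surjective j
    rw [finProdFinEquiv_val_div hm, finProdFinEquiv_val_div hm] at hij
    simpa only [blk_apply, Matrix.zero_apply] using congr_fun₂ (hA K L hij) a b

lemma blk_braidB (hm : 0 < m) (I I' : Fin n) (A : Matrix (Fin (n * m)) (Fin (n * m)) ℂ)
    (K L : Fin n) :
    blk (braidB hm I I' A) K L =
      if K = I ∧ L = I then (blk A I I')ᵀ * ((blk A I I)ᵀ)⁻¹
      else if K = I ∧ L = I' then -1
      else if K = I' ∧ L = I then blk A I I * ((blk A I I)ᵀ)⁻¹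
      else if K = I' ∧ L = I' then 0
      else if K = L then 1 else 0 := by
  ext a b
  rw [blk_apply, braidB]
  simp only [blkIdx_finProdFinEquiv, inIdx_finProdFinEquiv]

lemma transpose_pi_single {ι p q α : Type*} [DecidableEq ι] [Zero α] (i j : ι)
    (M : Matrix p q α) : (Pi.single (M := fun _ => Matrix p q α) i M j)ᵀ =
      Pi.single (M := fun _ => Matrix q p α) i Mᵀ j :=
  Pi.apply_single (fun _ => transpose) (fun _ => transpose_zero) i M j

section braid

/- In the names below, `fst` and `snd` stand for the block indices `I` and `I'`. -/

variable (hm : 0 < m) {I I' : Fin n} (A : Matrix (Fin (n * m)) (Fin (n * m)) ℂ)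

lemma blk_braidB_fst (hI : I ≠ I') :
    blk (braidB hm I I' A) I
      = Pi.single I ((blk A I I')ᵀ * ((blk A I I)ᵀ)⁻¹) - Pi.single I' 1 := by
  ext1 L
  rw [blk_braidB]
  by_cases hL : L = I
  · subst hL; simp [hI]
  · by_cases hL' : L = I'
    · subst hL'; simp [hI.symm]
    · simp [hL, hL', Ne.symm hL]

lemma blk_braidB_snd (hI : I ≠ I') :
    blk (braidB hm I I' A) I' = Pi.single I (blk A I I * ((blk A I I)ᵀ)⁻¹) := by
  ext1 L
  rw [blk_braidB]
  by_cases hL : L = I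
  · subst hL; simp [hI.symm]
  · by_cases hL' : L = I'
    · subst hL'; simp [hI.symm]
    · simp [hL, hL', Ne.symm hL']

lemma blk_braidB_of_ne {K : Fin n} (hK : K ≠ I) (hK' : K ≠ I') :
    blk (braidB hm I I' A) K = Pi.single K 1 := by
  ext1 L
  rw [blk_braidB]
  by_cases hL : L = K
  · subst hL; simp [hK, hK']
  · simp [hK, hK', hL, Ne.symm hL]

variable (C : Matrix (Fin (n * m)) (Fin (n * m)) ℂ)

lemma blk_braidB_mul_fst (hI : I ≠ I') (L : Fin n) :
    blk (braidB hm I I' A * C) I L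
      = (blk A I I')ᵀ * ((blk A I I)ᵀ)⁻¹ * blk C I L - blk C I' L := by
  rw [blk_mul, blk_braidB_fst hm A hI, sub_dotProduct, single_dotProduct, single_dotProduct,
    one_mul]

lemma blk_braidB_mul_snd (hI : I ≠ I') (L : Fin n) :
    blk (braidB hm I I' A * C) I' L = blk A I I * ((blk A I I)ᵀ)⁻¹ * blk C I L := by
  rw [blk_mul, blk_braidB_snd hm A hI, single_dotProduct]

lemma blk_braidB_mul_of_ne {K : Fin n} (hK : K ≠ I) (hK' : K ≠ I') (L : Fin n) :
    blk (braidB hm I I' A * C) K L = blk C K L := by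
  rw [blk_mul, blk_braidB_of_ne hm A hK hK', single_dotProduct, one_mul]

lemma blk_braidB_transpose_fst (hI : I ≠ I') :
    (fun J => blk (braidB hm I I' A)ᵀ J I)
      = Pi.single I ((blk A I I)⁻¹ * blk A I I') - Pi.single I' 1 := by
  ext1 J
  simp only [blk_transpose, blk_braidB_fst hm A hI, Pi.sub_apply, transpose_sub,
    transpose_pi_single, transpose_mul, transpose_nonsing_inv, transpose_transpose, transpose_one]

lemma blk_mul_braidB_transpose_fst (hI : I ≠ I') (K : Fin n) :
    blk (C * (braidB hm I I' A)ᵀ) K I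
      = blk C K I * ((blk A I I)⁻¹ * blk A I I') - blk C K I' := by
  rw [blk_mul, blk_braidB_transpose_fst hm A hI, dotProduct_sub, dotProduct_single,
    dotProduct_single, mul_one]

lemma blk_braidB_transpose_snd (hI : I ≠ I') :
    (fun J => blk (braidB hm I I' A)ᵀ J I')
      = Pi.single I ((blk A I I)⁻¹ * (blk A I I)ᵀ) := by
  ext1 J
  simp only [blk_transpose, blk_braidB_snd hm A hI, transpose_pi_single, transpose_mul,
    transpose_nonsing_inv, transpose_transpose]

lemma blk_braidB_transpose_of_ne {L : Fin n} (hL : L ≠ I) (hL' : L ≠ I') :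
    (fun J => blk (braidB hm I I' A)ᵀ J L) = Pi.single L 1 := by
  ext1 J
  simp only [blk_transpose, blk_braidB_of_ne hm A hL hL', transpose_pi_single, transpose_one]

lemma blk_mul_braidB_transpose_snd (hI : I ≠ I') (K : Fin n) :
    blk (C * (braidB hm I I' A)ᵀ) K I' = blk C K I * ((blk A I I)⁻¹ * (blk A I I)ᵀ) := by
  rw [blk_mul, blk_braidB_transpose_snd hm A hI, dotProduct_single]

lemma blk_mul_braidB_transpose_of_ne {L : Fin n} (hL : L ≠ I) (hL' : L ≠ I') (K : Fin n) :
    blk (C * (braidB hm I I' A)ᵀ) K L = blk C K L := by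
  rw [blk_mul, blk_braidB_transpose_of_ne hm A hL hL', dotProduct_single, mul_one]

end braid

section braidAct

variable (hm : 0 < m) {I I' : Fin n} (A : Matrix (Fin (n * m)) (Fin (n * m)) ℂ)

lemma blk_braidAct_of_ne {K L : Fin n} (hK : K ≠ I) (hK' : K ≠ I') (hL : L ≠ I)
    (hL' : L ≠ I') :
    blk (braidAct hm I I' A) K L = blk A K L := by
  rw [braidAct, blk_mul_braidB_transpose_of_ne hm A _ hL hL', blk_braidB_mul_of_ne hm A _ hK hK']

lemma blk_braidAct_fst_of_ne (hI : I ≠ I') {L : Fin n} (hL : L ≠ I) (hL' : L ≠ I') :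
    blk (braidAct hm I I' A) I L
      = (blk A I I')ᵀ * ((blk A I I)ᵀ)⁻¹ * blk A I L - blk A I' L := by
  rw [braidAct, blk_mul_braidB_transpose_of_ne hm A _ hL hL', blk_braidB_mul_fst hm A _ hI]

lemma blk_braidAct_snd_of_ne (hI : I ≠ I') {L : Fin n} (hL : L ≠ I) (hL' : L ≠ I') :
    blk (braidAct hm I I' A) I' L = blk A I I * ((blk A I I)ᵀ)⁻¹ * blk A I L := by
  rw [braidAct, blk_mul_braidB_transpose_of_ne hm A _ hL hL', blk_braidB_mul_snd hm A _ hI]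

lemma blk_braidAct_of_ne_fst (hI : I ≠ I') {K : Fin n} (hK : K ≠ I) (hK' : K ≠ I') :
    blk (braidAct hm I I' A) K I = blk A K I * (blk A I I)⁻¹ * blk A I I' - blk A K I' := by
  rw [braidAct, blk_mul_braidB_transpose_fst hm A _ hI, blk_braidB_mul_of_ne hm A _ hK hK',
    blk_braidB_mul_of_ne hm A _ hK hK', mul_assoc]

lemma blk_braidAct_of_ne_snd (hI : I ≠ I') {K : Fin n} (hK : K ≠ I) (hK' : K ≠ I') :
    blk (braidAct hm I I' A) K I' = blk A K I * (blk A I I)⁻¹ * (blk A I I)ᵀ := by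
  rw [braidAct, blk_mul_braidB_transpose_snd hm A _ hI, blk_braidB_mul_of_ne hm A _ hK hK',
    mul_assoc]

variable {A}

lemma blk_braidAct_snd_fst (hI : I ≠ I') (hX : IsUnit (blk A I I).det) :
    blk (braidAct hm I I' A) I' I = 0 := by
  rw [braidAct, blk_mul_braidB_transpose_fst hm A _ hI, blk_braidB_mul_snd hm A _ hI,
    blk_braidB_mul_snd hm A _ hI, mul_assoc, mul_nonsing_inv_cancel_left _ _ hX, sub_self]

lemma blk_braidAct_snd_snd (hI : I ≠ I') (hX : IsUnit (blk A I I).det) :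
    blk (braidAct hm I I' A) I' I' = blk A I I := by
  have hXT : IsUnit (blk A I I)ᵀ.det := by rwa [det_transpose]
  rw [braidAct, blk_mul_braidB_transpose_snd hm A _ hI, blk_braidB_mul_snd hm A _ hI, mul_assoc,
    mul_nonsing_inv_cancel_left _ _ hX, nonsing_inv_mul_cancel_right _ _ hXT]

lemma blk_braidAct_fst_fst (hI : I ≠ I') (hX : IsUnit (blk A I I).det)
    (hA : blk A I' I = 0) :
    blk (braidAct hm I I' A) I I = blk A I' I' := by
  rw [braidAct, blk_mul_braidB_transpose_fst hm A _ hI, blk_braidB_mul_fst hm A _ hI,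
    blk_braidB_mul_fst hm A _ hI, hA, sub_zero, mul_assoc, mul_nonsing_inv_cancel_left _ _ hX,
    sub_sub_cancel]

lemma blk_braidAct_fst_snd (hI : I ≠ I') (hX : IsUnit (blk A I I).det)
    (hA : blk A I' I = 0) :
    blk (braidAct hm I I' A) I I' = (blk A I I')ᵀ := by
  have hXT : IsUnit (blk A I I)ᵀ.det := by rwa [det_transpose]
  rw [braidAct, blk_mul_braidB_transpose_snd hm A _ hI, blk_braidB_mul_fst hm A _ hI, hA,
    sub_zero, mul_assoc, mul_nonsing_inv_cancel_left _ _ hX,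
    nonsing_inv_mul_cancel_right _ _ hXT]

end braidAct

lemma blk_braidAct_eq_zero_of_lt (hm : 0 < m) {I I' : Fin n} (hI' : (I' : ℕ) = I + 1)
    {A : Matrix (Fin (n * m)) (Fin (n * m)) ℂ} (hA : ∀ K L : Fin n, L < K → blk A K L = 0)
    (hX : IsUnit (blk A I I).det) {K L : Fin n} (hLK : L < K) :
    blk (braidAct hm I I' A) K L = 0 := by
  have hI : I ≠ I' := by omega
  rcases eq_or_ne L I with rfl | hL
  · rcases eq_or_ne K I' with rfl | hK'
    · exact blk_braidAct_snd_fst hm hI hX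
    · rw [blk_braidAct_of_ne_fst hm A hI hLK.ne' hK', hA K L hLK, hA K I' (by omega),
        zero_mul, zero_mul, sub_zero]
  rcases eq_or_ne L I' with rfl | hL'
  · rw [blk_braidAct_of_ne_snd hm A hI (by omega) hLK.ne', hA K I (by omega), zero_mul, zero_mul]
  rcases eq_or_ne K I with rfl | hK
  · rw [blk_braidAct_fst_of_ne hm A hI hL hL', hA _ _ hLK, hA I' L (by omega), mul_zero, sub_zero]
  rcases eq_or_ne K I' with rfl | hK'
  · rw [blk_braidAct_snd_of_ne hm A hI hL hL', hA I L (by omega), mul_zero]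
  · rw [blk_braidAct_of_ne hm A hK hK' hL hL', hA K L hLK]

theorem braid_preserves_but_general (n m : ℕ) (hm : 1 ≤ m)
    (I I' : Fin n) (hI' : (I' : ℕ) = (I : ℕ) + 1)
    (A : Matrix (Fin (n * m)) (Fin (n * m)) ℂ) (hA : IsBUT n m A)
    (hinv : IsUnit (blk A I I).det) :
    IsBUT n m (braidAct hm I I' A) ∧
    blk (braidAct hm I I' A) I I = blk A I' I' ∧
    blk (braidAct hm I I' A) I' I' = blk A I I ∧
    blk (braidAct hm I I' A) I I' = (blk A I I')ᵀ ∧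
    (∀ J : Fin n, J < I →
      blk (braidAct hm I I' A) J I = blk A J I * (blk A I I)⁻¹ * blk A I I' - blk A J I' ∧
      blk (braidAct hm I I' A) J I' = blk A J I * (blk A I I)⁻¹ * (blk A I I)ᵀ) ∧
    (∀ J : Fin n, I' < J →
      blk (braidAct hm I I' A) I J
          = (blk A I I')ᵀ * ((blk A I I)ᵀ)⁻¹ * blk A I J - blk A I' J ∧
      blk (braidAct hm I I' A) I' J = blk A I I * ((blk A I I)ᵀ)⁻¹ * blk A I J) ∧
    (∀ K L : Fin n, K ≠ I → K ≠ I' → L ≠ I → L ≠ I' →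
      blk (braidAct hm I I' A) K L = blk A K L) ∧
    ((∀ J : Fin n, (blk A J J).det = 1) → ∀ J : Fin n, (blk (braidAct hm I I' A) J J).det = 1) := by
  have hI : I ≠ I' := by omega
  have hlt : I < I' := by omega
  rw [isBUT_iff_blk_eq_zero hm] at hA
  have hII := blk_braidAct_fst_fst hm hI hinv (hA I' I hlt)
  have hI'I' := blk_braidAct_snd_snd hm hI hinv
  refine ⟨(isBUT_iff_blk_eq_zero hm _).2 fun K L => blk_braidAct_eq_zero_of_lt hm hI' hA hinv,
    hII, hI'I', blk_braidAct_fst_snd hm hI hinv (hA I' I hlt),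
    fun J hJ => ⟨blk_braidAct_of_ne_fst hm A hI hJ.ne (hJ.trans hlt).ne,
      blk_braidAct_of_ne_snd hm A hI hJ.ne (hJ.trans hlt).ne⟩,
    fun J hJ => ⟨blk_braidAct_fst_of_ne hm A hI (hlt.trans hJ).ne' hJ.ne',
      blk_braidAct_snd_of_ne hm A hI (hlt.trans hJ).ne' hJ.ne'⟩,
    fun K L => blk_braidAct_of_ne hm A, fun hdet J => ?_⟩
  rcases eq_or_ne J I with rfl | hJ
  · rw [hII]; exact hdet I'
  rcases eq_or_ne J I' with rfl | hJ'
  · rw [hI'I']; exact hdet I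
  · rw [blk_braidAct_of_ne hm A hJ hJ' hJ hJ']; exact hdet J

/-- the braid transformation `Ã = B_{I,I+1}(A)·A·B_{I,I+1}(A)ᵀ` of a
block-upper-triangular `A` (with `A_{I,I}` invertible) is again block-upper-triangular,
with the stated blocks; in particular it preserves the conditions `det A_{J,J} = 1`,
so `β_{I,I+1}` maps `𝒜_{n,m}` to itself. -/
theorem braid_preserves_but (n m : ℕ) (hn : 2 ≤ n) (hm : 1 ≤ m)
    (I I' : Fin n) (hI' : (I' : ℕ) = (I : ℕ) + 1)
    (A : Matrix (Fin (n * m)) (Fin (n * m)) ℂ) (hA : IsBUT n m A)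
    (hinv : IsUnit (blk A I I).det) :
    IsBUT n m (braidAct hm I I' A) ∧
    blk (braidAct hm I I' A) I I = blk A I' I' ∧
    blk (braidAct hm I I' A) I' I' = blk A I I ∧
    blk (braidAct hm I I' A) I I' = (blk A I I')ᵀ ∧
    (∀ J : Fin n, J < I →
      blk (braidAct hm I I' A) J I = blk A J I * (blk A I I)⁻¹ * blk A I I' - blk A J I' ∧
      blk (braidAct hm I I' A) J I' = blk A J I * (blk A I I)⁻¹ * (blk A I I)ᵀ) ∧
    (∀ J : Fin n, I' < J →
      blk (braidAct hm I I' A) I J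
          = (blk A I I')ᵀ * ((blk A I I)ᵀ)⁻¹ * blk A I J - blk A I' J ∧
      blk (braidAct hm I I' A) I' J = blk A I I * ((blk A I I)ᵀ)⁻¹ * blk A I J) ∧
    (∀ K L : Fin n, K ≠ I → K ≠ I' → L ≠ I → L ≠ I' →
      blk (braidAct hm I I' A) K L = blk A K L) ∧
    ((∀ J : Fin n, (blk A J J).det = 1) → ∀ J : Fin n, (blk (braidAct hm I I' A) J J).det = 1) :=
  braid_preserves_but_general n m hm I I' hI' A hA hinv
end
end
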